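/- Let G₁ and G₂ be finitely generated groups with finite generating sets S₁ and S₂, with walk-through functions g₁ and g₂ and critical probabilities p_c(G₁) and p_c(G₂) of their respective Cayley graphs. Then for every p with 0 < p < min(p_c(G₁), p_c(G₂)), the function t ↦ g₂(p, g₁(p,t)) − t is concave on the interval [0,1]. -/

import Mathlib

open MeasureTheory ENNReal

namespace Perc

/-- Percolation configurations on the edge set `E`: each edge is `true` (open) or
`false` (closed). -/
abbrev Config (E : Type*) := E → Bool

/-- `μ` is the Bernoulli product measure `P_p` with parameter `p` on `{0,1}^E`: the measure
of every finite cylinder event is the corresponding product.  (This determines `μ` uniquely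
on the product σ-algebra, since cylinders form a π-system generating it.) -/
def IsBernoulli {E : Type*} (p : ℝ) (μ : Measure (Config E)) : Prop :=
  ∀ (F : Finset E) (σ : E → Bool),
    μ {ω | ∀ e ∈ F, ω e = σ e} =
      ∏ e ∈ F, ENNReal.ofReal (if σ e then p else 1 - p)

variable {G ι : Type*} [Group G]

/-- In the Cayley graph of `G` with edge set `G × ι`, where the edge `(a, i)` joins `a` and
`a * f i` (the function `f : ι → G` lists the generators, with multiplicity), this says that
vertices `a` and `b` are joined by some open edge of the configuration `ω`. -/
def Step (f : ι → G) (ω : Config (G × ι)) (a b : G) : Prop :=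
  ∃ i : ι, (ω (a, i) = true ∧ b = a * f i) ∨ (ω (b, i) = true ∧ a = b * f i)

/-- `x` and `y` are connected by a path of open edges (`x ↔ y`). -/
def Conn (f : ι → G) (ω : Config (G × ι)) (x y : G) : Prop :=
  Relation.ReflTransGen (Step f ω) x y

/-- The open cluster `C` of the identity. -/
def cluster (f : ι → G) (ω : Config (G × ι)) : Set G :=
  {x | Conn f ω 1 x}

/-- The percolation function `θ`: the probability that the cluster of the identity is
infinite. -/
noncomputable def theta (f : ι → G) (μ : Measure (Config (G × ι))) : ℝ :=
  (μ {ω | (cluster f ω).Infinite}).toReal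

/-- The expected cluster size `χ = E(|C|) ∈ [0,∞]` (where `|C| ∈ ℕ∞` is coerced
to `ℝ≥0∞`). -/
noncomputable def chi (f : ι → G) (μ : Measure (Config (G × ι))) : ℝ≥0∞ :=
  ∫⁻ ω, ((cluster f ω).encard : ℝ≥0∞) ∂μ

/-- The critical probability `p_c = inf {p ∈ [0,1] | θ(p) > 0}`, with the convention
`p_c = 1` if `θ` vanishes on `[0,1]`; here `μ p` is the percolation measure at
parameter `p`. -/
noncomputable def pc (f : ι → G) (μ : ℝ → Measure (Config (G × ι))) : ℝ :=
  sInf ({p | p ∈ Set.Icc (0 : ℝ) 1 ∧ 0 < theta f (μ p)} ∪ {1})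

/-- The word metric on `G` with respect to the generators `f i`: the length of a shortest
word in the generators and their inverses taking `x` to `y`.  (When the generators generate
`G`, this is the graph distance in the Cayley graph.) -/
noncomputable def wdist (f : ι → G) (x y : G) : ℕ :=
  sInf {n : ℕ | ∃ l : List G, l.length = n ∧
    (∀ g ∈ l, (∃ i, f i = g) ∨ (∃ i, (f i)⁻¹ = g)) ∧ x * l.prod = y}

/-- Schonmann's critical point
`p_exp = sup {p ∈ [0,1] | ∃ c > 0, γ > 0, ∀ x y, P_p(x ↔ y) ≤ c·exp(-γ·dist(x,y))}`. -/
noncomputable def pexp (f : ι → G) (μ : ℝ → Measure (Config (G × ι))) : ℝ :=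
  sSup {p | p ∈ Set.Icc (0 : ℝ) 1 ∧ ∃ c > 0, ∃ γ > 0, ∀ x y : G,
    (μ p {ω | Conn f ω x y}).toReal ≤ c * Real.exp (-γ * (wdist f x y : ℝ))}

/-- The walk-through function `g(p,t) = 1 - ∑_{n≥1} (1-t)^{n-1} P_p(|C| = n)` of a Cayley
graph; here `μ` is the percolation measure at parameter `p`. -/
noncomputable def wt (f : ι → G) (μ : Measure (Config (G × ι))) (t : ℝ) : ℝ :=
  1 - ∑' n : ℕ, (1 - t) ^ n * (μ {ω | (cluster f ω).encard = ((n + 1 : ℕ) : ℕ∞)}).toReal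

/-- The ball of radius `j`: all products of at most `j` elements of `S ∪ S⁻¹`. -/
def ball (S : Set G) (j : ℕ) : Set G :=
  {g | ∃ l : List G, l.length ≤ j ∧ (∀ x ∈ l, x ∈ S ∨ x⁻¹ ∈ S) ∧ l.prod = g}

/-- The Cheeger constant `h = inf_K |∂K| / |K|`, the infimum over nonempty finite vertex
sets `K` of the number of edges `(a, i)` (joining `a` and `a * f i`) with exactly one
endpoint in `K`, divided by `|K|`. -/
noncomputable def cheeger (f : ι → G) : ℝ :=
  ⨅ K : {K : Finset G // K.Nonempty},
    (Nat.card {e : G × ι // Xor' (e.1 ∈ K.1) (e.1 * f e.2 ∈ K.1)} : ℝ) / (K.1.card : ℝ)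

/-- The open cluster of the identity in the subgraph induced on the vertex set `V`: only
open edges with both endpoints in `V` may be used. -/
def clusterIn (f : ι → G) (V : Set G) (ω : Config (G × ι)) : Set G :=
  {x | Relation.ReflTransGen (fun a b => Step f ω a b ∧ a ∈ V ∧ b ∈ V) 1 x}

/-- The generators of `G` given by a generating set `S` (one edge orbit per element
of `S`). -/
def setGens (S : Set G) : S → G := Subtype.val

/-- The generators of the free product `G₁ * G₂` given by the disjoint union `S₁ ⊔ S₂` of
generating sets, embedded via the canonical monomorphisms. -/
def coprodGens {G₁ G₂ : Type*} [Group G₁] [Group G₂] (S₁ : Set G₁) (S₂ : Set G₂) :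
    S₁ ⊕ S₂ → Monoid.Coprod G₁ G₂ :=
  Sum.elim (fun s => Monoid.Coprod.inl (s : G₁)) (fun s => Monoid.Coprod.inr (s : G₂))

/-- The generators of the free product `G₁ * ⋯ * G_n` given by the disjoint union
`S₁ ⊔ ⋯ ⊔ S_n` of generating sets, embedded via the canonical monomorphisms. -/
def coprodIGens {n : ℕ} {G : Fin n → Type*} [∀ i, Group (G i)] (S : ∀ i, Set (G i)) :
    (Σ i, S i) → Monoid.CoprodI G :=
  fun x => Monoid.CoprodI.of (x.2 : G x.1)

/-- The image of a list of syllables in the free product `G₁ * G₂`. -/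
def sylProd {G₁ G₂ : Type*} [Group G₁] [Group G₂] (l : List (G₁ ⊕ G₂)) :
    Monoid.Coprod G₁ G₂ :=
  (l.map (Sum.elim (fun g => Monoid.Coprod.inl g) (fun h => Monoid.Coprod.inr h))).prod

/-- The set `P₁` of nontrivial elements of `G₁ * G₂` whose normal form begins with a
nontrivial syllable of `G₁`: elements represented by a nonempty alternating product of
nontrivial syllables, the first syllable lying in `G₁`.  (Such a representation is the
normal form, which is unique.) -/
def beginsLeft {G₁ G₂ : Type*} [Group G₁] [Group G₂] (x : Monoid.Coprod G₁ G₂) : Prop :=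
  ∃ l : List (G₁ ⊕ G₂), l ≠ [] ∧ (∀ a ∈ l, a ≠ Sum.inl 1 ∧ a ≠ Sum.inr 1) ∧
    l.Chain' (fun a b => a.isLeft ≠ b.isLeft) ∧
    (∃ g : G₁, l.head? = some (Sum.inl g)) ∧ sylProd l = x

/-- The set `P₂` of nontrivial elements of `G₁ * G₂` whose normal form begins with a
nontrivial syllable of `G₂`. -/
def beginsRight {G₁ G₂ : Type*} [Group G₁] [Group G₂] (x : Monoid.Coprod G₁ G₂) : Prop :=
  ∃ l : List (G₁ ⊕ G₂), l ≠ [] ∧ (∀ a ∈ l, a ≠ Sum.inl 1 ∧ a ≠ Sum.inr 1) ∧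
    l.Chain' (fun a b => a.isLeft ≠ b.isLeft) ∧
    (∃ h : G₂, l.head? = some (Sum.inr h)) ∧ sylProd l = x

end Perc

open Perc

/-!
The walk-through function is `g(t) = 1 - ∑ₙ (1-t)ⁿ aₙ` with `aₙ = P_p(|C| = n+1) ≥ 0` and
`∑ aₙ ≤ 1`, the events `{|C| = n+1}` being disjoint.  Each `(1-t)ⁿ` is convex on `[0,1]`, so
`g` is concave, nondecreasing and maps `[0,1]` into itself.  A concave nondecreasing function
of a concave function is concave, and subtracting the linear function `t` keeps concavity.
-/

open Set

theorem ConcaveOn.comp_of_mapsTo {E : Type*} [AddCommGroup E] [Module ℝ E] {s : Set E}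
    {t : Set ℝ} {f : E → ℝ} {g : ℝ → ℝ} (hg : ConcaveOn ℝ t g)
    (hf : ConcaveOn ℝ s f) (hg_mono : MonotoneOn g t) (hst : MapsTo f s t) :
    ConcaveOn ℝ s (g ∘ f) := by
  refine ⟨hf.1, fun x hx y hy a b ha hb hab => ?_⟩
  calc a • g (f x) + b • g (f y) ≤ g (a • f x + b • f y) := hg.2 (hst hx) (hst hy) ha hb hab
    _ ≤ g (f (a • x + b • y)) :=
        hg_mono (hg.1 (hst hx) (hst hy) ha hb hab) (hst (hf.1 hx hy ha hb hab))
          (hf.2 hx hy ha hb hab)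

theorem convexOn_tsum {ι E : Type*} [AddCommGroup E] [Module ℝ E] {s : Set E}
    {f : ι → E → ℝ} (hs : Convex ℝ s) (hf : ∀ i, ConvexOn ℝ s (f i))
    (hsum : ∀ x ∈ s, Summable fun i => f i x) :
    ConvexOn ℝ s fun x => ∑' i, f i x := by
  refine ⟨hs, fun x hx y hy a b ha hb hab => ?_⟩
  have hsx := (hsum x hx).mul_left a
  have hsy := (hsum y hy).mul_left b
  calc ∑' i, f i (a • x + b • y) ≤ ∑' i, (a * f i x + b * f i y) :=
        (hsum _ (hs hx hy ha hb hab)).tsum_le_tsum (fun i => (hf i).2 hx hy ha hb hab)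
          (hsx.add hsy)
    _ = a • ∑' i, f i x + b • ∑' i, f i y := by
        rw [hsx.tsum_add hsy, tsum_mul_left, tsum_mul_left, smul_eq_mul, smul_eq_mul]

namespace Perc

noncomputable def walkThrough (a : ℕ → ℝ) (t : ℝ) : ℝ := 1 - ∑' n, (1 - t) ^ n * a n

section WalkThrough

variable {a : ℕ → ℝ} (ha : ∀ n, 0 ≤ a n) (hs : Summable a)
include ha

theorem one_sub_pow_mul_le {t : ℝ} (ht : t ∈ Icc (0 : ℝ) 1) (n : ℕ) :
    (1 - t) ^ n * a n ≤ a n :=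
  mul_le_of_le_one_left (ha n) (pow_le_one₀ (by linarith [ht.2]) (by linarith [ht.1]))

theorem one_sub_pow_mul_nonneg {t : ℝ} (ht : t ∈ Icc (0 : ℝ) 1) (n : ℕ) :
    0 ≤ (1 - t) ^ n * a n :=
  mul_nonneg (pow_nonneg (by linarith [ht.2]) n) (ha n)

include hs

theorem summable_one_sub_pow_mul {t : ℝ} (ht : t ∈ Icc (0 : ℝ) 1) :
    Summable fun n => (1 - t) ^ n * a n :=
  hs.of_nonneg_of_le (one_sub_pow_mul_nonneg ha ht) (one_sub_pow_mul_le ha ht)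

theorem concaveOn_walkThrough : ConcaveOn ℝ (Icc (0 : ℝ) 1) (walkThrough a) := by
  have hterm (n : ℕ) : ConvexOn ℝ (Icc (0 : ℝ) 1) fun t => (1 - t) ^ n * a n := by
    have hpow := ((convexOn_pow n).comp_affineMap (AffineMap.lineMap (1 : ℝ) 0)).smul (ha n)
    refine (hpow.subset (fun t ht => ?_) (convex_Icc 0 1)).congr fun t _ => ?_
    · simp [AffineMap.lineMap_apply_ring, ht.2]
    · simp [AffineMap.lineMap_apply_ring, mul_comm]
  exact (concaveOn_const 1 (convex_Icc 0 1)).sub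
    (convexOn_tsum (convex_Icc 0 1) hterm fun t ht => summable_one_sub_pow_mul ha hs ht)

theorem monotoneOn_walkThrough : MonotoneOn (walkThrough a) (Icc (0 : ℝ) 1) := by
  intro x hx y hy hxy
  have hle : ∑' n, (1 - y) ^ n * a n ≤ ∑' n, (1 - x) ^ n * a n :=
    (summable_one_sub_pow_mul ha hs hy).tsum_le_tsum
      (fun n => mul_le_mul_of_nonneg_right
        (pow_le_pow_left₀ (by linarith [hy.2]) (by linarith) n) (ha n))
      (summable_one_sub_pow_mul ha hs hx)
  simp only [walkThrough]
  linarith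

theorem mapsTo_walkThrough (h1 : ∑' n, a n ≤ 1) :
    MapsTo (walkThrough a) (Icc (0 : ℝ) 1) (Icc (0 : ℝ) 1) := by
  intro t ht
  have hle : ∑' n, (1 - t) ^ n * a n ≤ ∑' n, a n :=
    (summable_one_sub_pow_mul ha hs ht).tsum_le_tsum (one_sub_pow_mul_le ha ht) hs
  have hnonneg : 0 ≤ ∑' n, (1 - t) ^ n * a n := tsum_nonneg (one_sub_pow_mul_nonneg ha ht)
  constructor <;> simp only [walkThrough] <;> linarith

end WalkThrough

theorem concaveOn_walkThrough_comp_sub {a b : ℕ → ℝ} (ha : ∀ n, 0 ≤ a n) (hsa : Summable a)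
    (ha1 : ∑' n, a n ≤ 1) (hb : ∀ n, 0 ≤ b n) (hsb : Summable b) :
    ConcaveOn ℝ (Icc (0 : ℝ) 1) fun t => walkThrough b (walkThrough a t) - t :=
  ((concaveOn_walkThrough hb hsb).comp_of_mapsTo (concaveOn_walkThrough ha hsa)
    (monotoneOn_walkThrough hb hsb) (mapsTo_walkThrough ha hsa ha1)).sub
    (convexOn_id (convex_Icc 0 1))

section Measurability

variable {G ι : Type*} [Group G] (f : ι → G)

theorem measurable_step [Countable ι] (a b : G) :
    Measurable fun ω : Config (G × ι) => Step f ω a b := by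
  have hopen (e : G × ι) : Measurable fun ω : Config (G × ι) => ω e = true :=
    Measurable.eq_const (measurable_pi_apply (X := fun _ => Bool) e) true
  exact Measurable.exists fun i =>
    ((hopen _).and measurable_const).or ((hopen _).and measurable_const)

theorem measurable_isChain_step [Countable ι] (x : G) (l : List G) :
    Measurable fun ω : Config (G × ι) => (x :: l).IsChain (Step f ω) := by
  induction l generalizing x with
  | nil => simpa only [List.isChain_singleton] using measurable_const
  | cons y l ih =>
    simpa only [List.isChain_cons_cons] using (measurable_step f x y).and (ih y)

theorem measurable_conn [Countable G] [Countable ι] (x y : G) :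
    Measurable fun ω : Config (G × ι) => Conn f ω x y := by
  have hpath (ω : Config (G × ι)) : Conn f ω x y ↔
      ∃ l : List G, (x :: l).IsChain (Step f ω) ∧ (x :: l).getLast (List.cons_ne_nil _ _) = y :=
    ⟨List.exists_isChain_cons_of_relationReflTransGen,
      fun ⟨l, hl, hlast⟩ => List.relationReflTransGen_of_exists_isChain_cons l hl hlast⟩
  simpa only [hpath] using
    Measurable.exists fun l => (measurable_isChain_step f x l).and measurable_const

theorem measurableSet_encard_cluster_eq [Countable G] [Countable ι] (n : ℕ) :
    MeasurableSet {ω : Config (G × ι) | (cluster f ω).encard = n} := by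
  have hfinset (ω : Config (G × ι)) : (cluster f ω).encard = n ↔
      ∃ A : Finset G, A.card = n ∧ ∀ x, Conn f ω 1 x ↔ x ∈ A := by
    constructor
    · intro hn
      have hfin := Set.finite_of_encard_eq_coe hn
      refine ⟨hfin.toFinset, ?_, fun x => by simp [cluster]⟩
      exact_mod_cast hfin.encard_eq_coe_toFinset_card.symm.trans hn
    · rintro ⟨A, hcard, hA⟩
      have hC : cluster f ω = A := Set.ext hA
      rw [hC, Set.encard_coe_eq_coe_finsetCard, hcard]
  simp_rw [hfinset]
  exact measurableSet_setOfPred.mpr <| Measurable.exists fun A =>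
    measurable_const.and <| Measurable.forall fun x => (measurable_conn f 1 x).iff measurable_const

end Measurability

section Probability

theorem hasSum_measureReal_iUnion {Ω κ : Type*} [MeasurableSpace Ω] [Countable κ]
    {μ : Measure Ω} [IsFiniteMeasure μ] {A : κ → Set Ω} (hA : ∀ k, MeasurableSet (A k))
    (hd : Pairwise (Function.onFun Disjoint A)) :
    HasSum (fun k => μ.real (A k)) (μ.real (⋃ k, A k)) := by
  have hunion := measure_iUnion (μ := μ) hd hA
  have hne : ∑' k, μ (A k) ≠ ∞ := hunion ▸ measure_ne_top μ _
  simpa only [measureReal_def, hunion, ENNReal.tsum_toReal_eq (ENNReal.ne_top_of_tsum_ne_top hne)]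
    using ENNReal.hasSum_toReal hne

theorem IsBernoulli.isProbabilityMeasure {E : Type*} {p : ℝ} {μ : Measure (Config E)}
    (hμ : IsBernoulli p μ) : IsProbabilityMeasure μ :=
  ⟨by simpa using hμ ∅ fun _ => true⟩

variable {G ι : Type*} [Group G] (f : ι → G) (μ : Measure (Config (G × ι)))

noncomputable def clusterSizeProb (n : ℕ) : ℝ :=
  μ.real {ω | (cluster f ω).encard = ((n + 1 : ℕ) : ℕ∞)}

theorem wt_eq_walkThrough : wt f μ = walkThrough (clusterSizeProb f μ) := rfl

theorem clusterSizeProb_nonneg (n : ℕ) : 0 ≤ clusterSizeProb f μ n := measureReal_nonneg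

variable [Countable G] [Countable ι]

theorem hasSum_clusterSizeProb [IsFiniteMeasure μ] :
    HasSum (clusterSizeProb f μ)
      (μ.real (⋃ n : ℕ, {ω | (cluster f ω).encard = ((n + 1 : ℕ) : ℕ∞)})) :=
  hasSum_measureReal_iUnion (fun n => measurableSet_encard_cluster_eq f (n + 1))
    fun m n hmn => Set.disjoint_left.mpr fun ω hm hn => hmn (by simpa using hm.symm.trans hn)

theorem tsum_clusterSizeProb_le_one [IsProbabilityMeasure μ] :
    ∑' n, clusterSizeProb f μ n ≤ 1 :=
  (hasSum_clusterSizeProb f μ).tsum_eq ▸ measureReal_le_one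

end Probability

theorem concaveOn_wt_comp_sub {G₁ G₂ ι₁ ι₂ : Type*} [Group G₁] [Group G₂]
    [Countable G₁] [Countable G₂] [Countable ι₁] [Countable ι₂]
    (f₁ : ι₁ → G₁) (f₂ : ι₂ → G₂) (μ₁ : Measure (Config (G₁ × ι₁)))
    (μ₂ : Measure (Config (G₂ × ι₂))) [IsProbabilityMeasure μ₁] [IsFiniteMeasure μ₂] :
    ConcaveOn ℝ (Icc (0 : ℝ) 1) fun t => wt f₂ μ₂ (wt f₁ μ₁ t) - t := by
  simp only [wt_eq_walkThrough]
  exact concaveOn_walkThrough_comp_sub (clusterSizeProb_nonneg f₁ μ₁)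
    (hasSum_clusterSizeProb f₁ μ₁).summable (tsum_clusterSizeProb_le_one f₁ μ₁)
    (clusterSizeProb_nonneg f₂ μ₂) (hasSum_clusterSizeProb f₂ μ₂).summable

theorem pc_le_one {G ι : Type*} [Group G] (f : ι → G) (μ : ℝ → Measure (Config (G × ι))) :
    pc f μ ≤ 1 :=
  csInf_le ⟨0, by rintro q (hq | rfl) <;> [exact hq.1.1; exact zero_le_one]⟩ (Or.inr rfl)

theorem countable_of_closure_eq_top {G : Type*} [Group G] {S : Set G} [Countable S]
    (hS : Subgroup.closure S = ⊤) : Countable G :=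
  (FreeGroup.lift_surjective_iff_closure_range_eq_top.mpr
    (by rwa [Subtype.range_coe] : Subgroup.closure (range ((↑) : S → G)) = ⊤)).countable

end Perc

/-- For finitely generated groups `G₁, G₂` with finite generating sets
and `0 < p < min(p_c(G₁), p_c(G₂))`, the function `t ↦ g₂(p, g₁(p,t)) - t` is concave on
`[0,1]`, where `gᵢ` is the walk-through function of `(Gᵢ, Sᵢ)`. -/
theorem walk_through_composition_concave
    {G₁ G₂ : Type*} [Group G₁] [Group G₂]
    (S₁ : Set G₁) (S₂ : Set G₂) (hfin₁ : S₁.Finite) (hfin₂ : S₂.Finite)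
    (hgen₁ : Subgroup.closure S₁ = ⊤) (hgen₂ : Subgroup.closure S₂ = ⊤)
    (μ₁ : ℝ → Measure (Config (G₁ × S₁))) (μ₂ : ℝ → Measure (Config (G₂ × S₂)))
    (hμ₁ : ∀ q ∈ Set.Icc (0 : ℝ) 1, IsBernoulli q (μ₁ q))
    (hμ₂ : ∀ q ∈ Set.Icc (0 : ℝ) 1, IsBernoulli q (μ₂ q))
    (p : ℝ) (hp0 : 0 < p)
    (hppc : p < min (pc (setGens S₁) μ₁) (pc (setGens S₂) μ₂)) :
    ConcaveOn ℝ (Set.Icc (0 : ℝ) 1)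
      (fun t => wt (setGens S₂) (μ₂ p) (wt (setGens S₁) (μ₁ p) t) - t) := by
  have : Countable S₁ := hfin₁.countable.to_subtype
  have : Countable S₂ := hfin₂.countable.to_subtype
  have : Countable G₁ := countable_of_closure_eq_top hgen₁
  have : Countable G₂ := countable_of_closure_eq_top hgen₂
  have hp : p ∈ Set.Icc (0 : ℝ) 1 :=
    ⟨hp0.le, (hppc.trans_le ((min_le_left _ _).trans (pc_le_one _ _))).le⟩
  have := (hμ₁ p hp).isProbabilityMeasure
  have := (hμ₂ p hp).isProbabilityMeasure
  exact concaveOn_wt_comp_sub _ _ _ _
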